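/- Suppose u : Y × Y → ℝ≥0 is nondegenerate and ℓ is a strictly proper loss function on the finite class set Y. Then for every q ∈ Δ(Y), the unique minimizer over p ∈ Δ(Y) of the expected utility-weighted loss Σ_y ℓ^u(p,y) q_y is given componentwise by p^u_y(q) = ū(y,q) / Σ_{y'} ū(y',q), where ū(y,q) = Σ_{y''} u(y,y'') q_{y''}. -/

import Mathlib

/-!
The expected utility-weighted loss of a prediction `p` is `ℓ p ⬝ᵥ (u *ᵥ q)`, i.e. the plain
expected loss of `p` under the vector of expected utilities `ū = u *ᵥ q`. Nondegeneracy makes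
`ū` a nonzero nonnegative vector, so it is a positive multiple of the distribution `pᵘ = ū / Σ ū`,
and strict properness says that `pᵘ` is the unique minimizer.
-/

open Finset Matrix

section

variable {ι : Type*} [Fintype ι]

def IsStrictlyProperLoss (ℓ : (ι → ℝ) → ι → ℝ) : Prop :=
  ∀ q ∈ stdSimplex ℝ ι, ∀ p ∈ stdSimplex ℝ ι, p ≠ q → ℓ q ⬝ᵥ q < ℓ p ⬝ᵥ q

theorem exists_pos_of_mem_stdSimplex {q : ι → ℝ} (hq : q ∈ stdSimplex ℝ ι) : ∃ i, 0 < q i := by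
  obtain ⟨i, -, hi⟩ := exists_lt_of_sum_lt (s := univ) (f := 0) (g := q) (by simp [hq.2])
  exact ⟨i, hi⟩

theorem div_sum_mem_stdSimplex {w : ι → ℝ} (hw : ∀ i, 0 ≤ w i) (hsum : 0 < ∑ i, w i) :
    (fun i => w i / ∑ j, w j) ∈ stdSimplex ℝ ι :=
  ⟨fun i => div_nonneg (hw i) hsum.le, by rw [← sum_div, div_self hsum.ne']⟩

theorem mulVec_nonneg {u : Matrix ι ι ℝ} {q : ι → ℝ} (hu : ∀ i j, 0 ≤ u i j)
    (hq : ∀ j, 0 ≤ q j) (i : ι) : 0 ≤ (u *ᵥ q) i :=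
  sum_nonneg fun j _ => mul_nonneg (hu i j) (hq j)

theorem sum_mulVec_pos {u : Matrix ι ι ℝ} {q : ι → ℝ} (hu : ∀ i j, 0 ≤ u i j)
    (hnd : ∀ j, ∃ i, 0 < u i j) (hq : q ∈ stdSimplex ℝ ι) : 0 < ∑ i, (u *ᵥ q) i := by
  obtain ⟨j, hj⟩ := exists_pos_of_mem_stdSimplex hq
  obtain ⟨i, hi⟩ := hnd j
  calc 0 < u i j * q j := mul_pos hi hj
    _ ≤ (u *ᵥ q) i := single_le_sum (fun k _ => mul_nonneg (hu i k) (hq.1 k)) (mem_univ j)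
    _ ≤ ∑ i, (u *ᵥ q) i := single_le_sum (fun k _ => mulVec_nonneg hu hq.1 k) (mem_univ i)

theorem IsStrictlyProperLoss.dotProduct_div_sum_lt {ℓ : (ι → ℝ) → ι → ℝ}
    (hℓ : IsStrictlyProperLoss ℓ) {w : ι → ℝ} (hw : ∀ i, 0 ≤ w i) (hsum : 0 < ∑ i, w i)
    {p : ι → ℝ} (hp : p ∈ stdSimplex ℝ ι) (hne : p ≠ fun i => w i / ∑ j, w j) :
    ℓ (fun i => w i / ∑ j, w j) ⬝ᵥ w < ℓ p ⬝ᵥ w := by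
  have hw_eq : w = (∑ j, w j) • fun i => w i / ∑ j, w j := by
    ext i
    simp [mul_div_cancel₀ _ hsum.ne']
  rw [hw_eq, dotProduct_smul, dotProduct_smul, ← hw_eq]
  exact mul_lt_mul_of_pos_left (hℓ _ (div_sum_mem_stdSimplex hw hsum) p hp hne) hsum

end

/-- Theorem 1, Optimal Utility-Weighted Prediction: for a
nonnegative nondegenerate utility `u` and a strictly proper loss `ℓ`, the unique
minimizer of expected utility-weighted loss is the normalized expected-utility
vector. -/
theorem optimal_utility_weighted_prediction {m : ℕ}
    (ℓ : (Fin m → ℝ) → Fin m → ℝ) (u : Fin m → Fin m → ℝ)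
    (hu0 : ∀ y' y, 0 ≤ u y' y) (hnd : ∀ y : Fin m, ∃ a : Fin m, 0 < u a y)
    (hproper : ∀ q ∈ stdSimplex ℝ (Fin m), ∀ p ∈ stdSimplex ℝ (Fin m), p ≠ q →
      ∑ y : Fin m, ℓ q y * q y < ∑ y : Fin m, ℓ p y * q y)
    (q : Fin m → ℝ) (hq : q ∈ stdSimplex ℝ (Fin m)) :
    let ubar : Fin m → ℝ := fun y => ∑ y'' : Fin m, u y y'' * q y''
    let pu : Fin m → ℝ := fun y => ubar y / ∑ y' : Fin m, ubar y'
    pu ∈ stdSimplex ℝ (Fin m) ∧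
      ∀ p ∈ stdSimplex ℝ (Fin m), p ≠ pu →
        ∑ y : Fin m, (∑ y' : Fin m, ℓ pu y' * u y' y) * q y
          < ∑ y : Fin m, (∑ y' : Fin m, ℓ p y' * u y' y) * q y := by
  intro ubar pu
  have hubar : ubar = of u *ᵥ q := rfl
  have hubar_nonneg : ∀ y, 0 ≤ ubar y := mulVec_nonneg hu0 hq.1
  have hsum : 0 < ∑ y, ubar y := sum_mulVec_pos hu0 hnd hq
  refine ⟨div_sum_mem_stdSimplex hubar_nonneg hsum, fun p hp hne => ?_⟩
  change ℓ pu ᵥ* of u ⬝ᵥ q < ℓ p ᵥ* of u ⬝ᵥ q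
  rw [← dotProduct_mulVec, ← dotProduct_mulVec, ← hubar]
  exact IsStrictlyProperLoss.dotProduct_div_sum_lt hproper hubar_nonneg hsum hp hne
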